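/- arXiv:2103.00605 — 2 statements merged into one kernel-verified Lean document; each statement's English description precedes it below -/
import Mathlib

section
/- Among all nonnegative tilting functions h, the harmonic mean h*(x) = (Σ_{l∈J} e_l(x)^{-1})^{-1} minimizes the functional V(h) = E[h(X)^2 Σ_{l∈J} e_l(X)^{-1}] / (E[h(X)])^2, and the minimum value is 1/E[h*(X)]. -/
open MeasureTheory

/-! With `S = ∑ l, e_l⁻¹` the harmonic mean is `h* = S⁻¹`, so `h*² S = h*` and
`V(h*) = 1 / E h*`. For any other `h`, integrating `S (h - t h*)² ≥ 0` gives a quadratic in `t`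
that is nonnegative for all `t`; its discriminant is the weighted Cauchy–Schwarz inequality
`(E h)² ≤ E[h² S] · E h*`, which is `V(h) ≥ 1 / E h*`. -/

theorem sq_integral_le_integral_sq_mul_mul_integral_inv {Ω : Type*} [MeasurableSpace Ω]
    {μ : Measure Ω} {a w : Ω → ℝ} (hw : ∀ᵐ ω ∂μ, 0 < w ω) (ha : Integrable a μ)
    (haw : Integrable (fun ω ↦ a ω ^ 2 * w ω) μ) (hw_inv : Integrable (fun ω ↦ (w ω)⁻¹) μ) :
    (∫ ω, a ω ∂μ) ^ 2 ≤ (∫ ω, a ω ^ 2 * w ω ∂μ) * ∫ ω, (w ω)⁻¹ ∂μ := by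
  have hquad : ∀ t : ℝ, 0 ≤ (∫ ω, (w ω)⁻¹ ∂μ) * (t * t) + (-2 * ∫ ω, a ω ∂μ) * t +
      ∫ ω, a ω ^ 2 * w ω ∂μ := by
    intro t
    have hpointwise : ∀ᵐ ω ∂μ, 0 ≤ (w ω)⁻¹ * (t * t) + -2 * a ω * t + a ω ^ 2 * w ω := by
      filter_upwards [hw] with ω hω
      have hsq : (w ω)⁻¹ * (t * t) + -2 * a ω * t + a ω ^ 2 * w ω =
          w ω * (a ω - t * (w ω)⁻¹) ^ 2 := by
        field_simp
        ring
      rw [hsq]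
      positivity
    have hlin : Integrable (fun ω ↦ (w ω)⁻¹ * (t * t) + -2 * a ω * t) μ :=
      (hw_inv.mul_const _).add ((ha.const_mul _).mul_const _)
    calc (0 : ℝ) ≤ ∫ ω, ((w ω)⁻¹ * (t * t) + -2 * a ω * t + a ω ^ 2 * w ω) ∂μ :=
          integral_nonneg_of_ae hpointwise
      _ = _ := by
        rw [integral_add hlin haw,
          integral_add (hw_inv.mul_const _) ((ha.const_mul _).mul_const _),
          integral_mul_const, integral_mul_const, integral_const_mul]
  have hdiscrim := discrim_le_zero hquad
  rw [discrim] at hdiscrim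
  linarith

theorem overlap_tilting_minimizes_variance_general
    {Ω : Type*} [MeasurableSpace Ω] (μ : Measure Ω)
    {𝒳 : Type*} [MeasurableSpace 𝒳] {J : Type*} [Fintype J]
    (hJ : 2 ≤ Fintype.card J)
    (X : Ω → 𝒳)
    (e : J → 𝒳 → ℝ)
    (he_pos : ∀ᵐ ω ∂μ, ∀ j, 0 < e j (X ω) ∧ e j (X ω) < 1)
    (hstar : 𝒳 → ℝ) (hhstar : ∀ x, hstar x = (∑ l : J, (e l x)⁻¹)⁻¹)
    (hstar_int : Integrable (fun ω => hstar (X ω)) μ)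
    (hstar_pos : 0 < ∫ ω, hstar (X ω) ∂μ) :
    (∀ h : 𝒳 → ℝ, Measurable h → (∀ x, 0 ≤ h x) →
      Integrable (fun ω => h (X ω)) μ →
      0 < ∫ ω, h (X ω) ∂μ →
      Integrable (fun ω => (h (X ω))^2 * ∑ l : J, (e l (X ω))⁻¹) μ →
      (∫ ω, (hstar (X ω))^2 * ∑ l : J, (e l (X ω))⁻¹ ∂μ) /
          (∫ ω, hstar (X ω) ∂μ)^2 ≤
        (∫ ω, (h (X ω))^2 * ∑ l : J, (e l (X ω))⁻¹ ∂μ) /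
          (∫ ω, h (X ω) ∂μ)^2) ∧
    (∫ ω, (hstar (X ω))^2 * ∑ l : J, (e l (X ω))⁻¹ ∂μ) /
        (∫ ω, hstar (X ω) ∂μ)^2 = 1 / ∫ ω, hstar (X ω) ∂μ := by
  have : Nonempty J := Fintype.card_pos_iff.mp (by omega)
  have hS_pos : ∀ᵐ ω ∂μ, 0 < ∑ l : J, (e l (X ω))⁻¹ := by
    filter_upwards [he_pos] with ω hω
    exact Finset.sum_pos (fun l _ ↦ inv_pos.mpr (hω l).1) Finset.univ_nonempty
  have hvar_star : ∫ ω, hstar (X ω) ^ 2 * ∑ l : J, (e l (X ω))⁻¹ ∂μ = ∫ ω, hstar (X ω) ∂μ := by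
    congr 1 with ω
    rw [hhstar]
    field_simp
  have hmin : (∫ ω, hstar (X ω) ^ 2 * ∑ l : J, (e l (X ω))⁻¹ ∂μ) / (∫ ω, hstar (X ω) ∂μ) ^ 2 =
      1 / ∫ ω, hstar (X ω) ∂μ := by
    rw [hvar_star, sq, div_mul_cancel_left₀ hstar_pos.ne', one_div]
  refine ⟨fun h _ _ h_int h_pos h_var_int ↦ ?_, hmin⟩
  rw [hmin, div_le_div_iff₀ hstar_pos (pow_pos h_pos 2), one_mul]
  simp only [hhstar] at hstar_int ⊢
  exact sq_integral_le_integral_sq_mul_mul_integral_inv hS_pos h_int h_var_int hstar_int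

/-- Among all nonnegative tilting functions h, the harmonic mean
h*(x) = (Σ_l e_l(x)⁻¹)⁻¹ minimizes V(h) = E[h(X)² Σ_l e_l(X)⁻¹]/(E[h(X)])²,
and the minimum value is 1/E[h*(X)]. -/
theorem overlap_tilting_minimizes_variance
    {Ω : Type*} [MeasurableSpace Ω] (μ : Measure Ω) [IsProbabilityMeasure μ]
    {𝒳 : Type*} [MeasurableSpace 𝒳] {J : Type*} [Fintype J]
    (hJ : 2 ≤ Fintype.card J)
    (X : Ω → 𝒳) (hX : Measurable X)
    (e : J → 𝒳 → ℝ) (he_meas : ∀ j, Measurable (e j))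
    (he_pos : ∀ᵐ ω ∂μ, ∀ j, 0 < e j (X ω) ∧ e j (X ω) < 1)
    (he_sum : ∀ᵐ ω ∂μ, ∑ j : J, e j (X ω) = 1)
    (hstar : 𝒳 → ℝ) (hhstar : ∀ x, hstar x = (∑ l : J, (e l x)⁻¹)⁻¹)
    (hstar_int : Integrable (fun ω => hstar (X ω)) μ)
    (hstar_pos : 0 < ∫ ω, hstar (X ω) ∂μ) :
    (∀ h : 𝒳 → ℝ, Measurable h → (∀ x, 0 ≤ h x) →
      Integrable (fun ω => h (X ω)) μ →
      0 < ∫ ω, h (X ω) ∂μ →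
      Integrable (fun ω => (h (X ω))^2 * ∑ l : J, (e l (X ω))⁻¹) μ →
      (∫ ω, (hstar (X ω))^2 * ∑ l : J, (e l (X ω))⁻¹ ∂μ) /
          (∫ ω, hstar (X ω) ∂μ)^2 ≤
        (∫ ω, (h (X ω))^2 * ∑ l : J, (e l (X ω))⁻¹ ∂μ) /
          (∫ ω, h (X ω) ∂μ)^2) ∧
    (∫ ω, (hstar (X ω))^2 * ∑ l : J, (e l (X ω))⁻¹ ∂μ) /
        (∫ ω, hstar (X ω) ∂μ)^2 = 1 / ∫ ω, hstar (X ω) ∂μ :=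
  overlap_tilting_minimizes_variance_general μ hJ X e he_pos hstar hhstar hstar_int hstar_pos
end

section
/- If a statistical functional φ admits the expansion θ̂_i = θ + φ'_i + (N−1)^{-1} Σ_{l≠i} φ''_{(l,i)} + R_{N,i} with E[φ'_i] = 0, E[φ''_{(l,i)} | O_i] = E[φ''_{(l,i)} | O_l] = 0 for l ≠ i, and √N max_i |R_{N,i}| → 0 in probability, then N^{-1/2} Σ_{i=1}^N (θ̂_i − θ − φ'_i) → 0 in probability; hence N^{-1/2} Σ_i (θ̂_i − θ) has the same limiting distribution as N^{-1/2} Σ_i φ'_i. -/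
/-!
Summing the expansion, `Σᵢ (θ̂ᵢ - θ - φ'ᵢ) = (N - 1)⁻¹ T_N + Σᵢ R_{N,i}` with
`T_N = Σ_{l ≠ i} φ''(O_l, O_i)`. By independence and degeneracy,
`E[φ''(O_a, O_b) φ''(O_c, O_d)] = 0` unless `{a, b} = {c, d}`, so
`E[T_N²] = 2 N (N - 1) E[φ''(O_0, O_1)²]` and the U-statistic term `N^{-1/2} (N - 1)⁻¹ T_N`
has second moment `O(1/N)`; Chebyshev's inequality sends it to `0` in probability.
The remainder term is bounded by `√N maxᵢ |R_{N,i}|`.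
-/

open MeasureTheory ProbabilityTheory Filter Topology Finset

theorem Finset.abs_le_biSup_abs {α : Type*} {s : Finset α} (g : α → ℝ) {i : α}
    (hi : i ∈ s) :
    |g i| ≤ ⨆ j ∈ s, |g j| := by
  refine le_ciSup_of_le ⟨∑ j ∈ s, |g j|, ?_⟩ i
    (le_ciSup_of_le (Set.finite_range _).bddAbove hi le_rfl)
  rintro _ ⟨j, rfl⟩
  exact Real.iSup_le (fun hj => single_le_sum (fun k _ => abs_nonneg (g k)) hj)
    (sum_nonneg fun k _ => abs_nonneg (g k))

theorem abs_inv_sqrt_mul_sum_le (g : ℕ → ℝ) (N : ℕ) :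
    |(√N)⁻¹ * ∑ i ∈ range N, g i| ≤ √N * ⨆ i ∈ range N, |g i| := by
  set M := ⨆ i ∈ range N, |g i|
  calc |(√N)⁻¹ * ∑ i ∈ range N, g i| = (√N)⁻¹ * |∑ i ∈ range N, g i| := by
        rw [abs_mul, abs_inv, abs_of_nonneg (Real.sqrt_nonneg _)]
    _ ≤ (√N)⁻¹ * (N * M) := by
        gcongr
        calc |∑ i ∈ range N, g i| ≤ ∑ i ∈ range N, |g i| := abs_sum_le_sum_abs _ _
          _ ≤ ∑ _ ∈ range N, M := sum_le_sum fun i hi => (range N).abs_le_biSup_abs g hi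
          _ = N * M := by rw [sum_const, card_range, nsmul_eq_mul]
    _ = √N * M := by rw [← mul_assoc, inv_mul_eq_div, Real.div_sqrt]

theorem Finset.sum_sum_erase_eq_sum_offDiag {α M : Type*} [DecidableEq α] [AddCommMonoid M]
    (s : Finset α) (F : α → α → M) :
    ∑ i ∈ s, ∑ l ∈ s.erase i, F l i = ∑ p ∈ s.offDiag, F p.1 p.2 :=
  (sum_finset_product_right' _ _ _ fun p => by rw [mem_offDiag, mem_erase]; tauto).symm

namespace MeasureTheory

variable {Ω ι E : Type*} [MeasurableSpace Ω] {μ : Measure Ω} {l : Filter ι}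

theorem TendstoInMeasure.add [SeminormedAddCommGroup E] {f g : ι → Ω → E} {a b : Ω → E}
    (hf : TendstoInMeasure μ f l a) (hg : TendstoInMeasure μ g l b) :
    TendstoInMeasure μ (f + g) l (a + b) := by
  rw [tendstoInMeasure_iff_norm] at hf hg ⊢
  intro ε hε
  have hsum := (hf (ε / 2) (half_pos hε)).add (hg (ε / 2) (half_pos hε))
  rw [add_zero] at hsum
  refine tendsto_of_tendsto_of_tendsto_of_le_of_le tendsto_const_nhds hsum (fun _ => zero_le)
    fun n => (measure_mono fun ω hω => ?_).trans (measure_union_le _ _)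
  by_contra hc
  simp only [Set.mem_union, Set.mem_ofPred_eq, not_or, not_le] at hω hc
  have := norm_add_le (f n ω - a ω) (g n ω - b ω)
  simp only [Pi.add_apply, add_sub_add_comm] at hω
  linarith

theorem TendstoInMeasure.of_norm_le [SeminormedAddCommGroup E] {f g : ι → Ω → E}
    (hg : TendstoInMeasure μ g l 0) (hfg : ∀ᶠ n in l, ∀ ω, ‖f n ω‖ ≤ ‖g n ω‖) :
    TendstoInMeasure μ f l 0 := by
  rw [tendstoInMeasure_iff_norm] at hg ⊢
  intro ε hε
  refine tendsto_of_tendsto_of_tendsto_of_le_of_le' tendsto_const_nhds (hg ε hε)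
    (Eventually.of_forall fun _ => zero_le) ?_
  filter_upwards [hfg] with n hn
  exact measure_mono fun ω hω => by
    simp only [Set.mem_ofPred_eq, Pi.zero_apply, sub_zero] at hω ⊢
    exact hω.trans (hn ω)

theorem tendstoInMeasure_zero_of_tendsto_integral_sq [IsFiniteMeasure μ] {f : ι → Ω → ℝ}
    (hf : ∀ᶠ n in l, Integrable (fun ω => f n ω ^ 2) μ)
    (hlim : Tendsto (fun n => ∫ ω, f n ω ^ 2 ∂μ) l (𝓝 0)) :
    TendstoInMeasure μ f l 0 := by
  rw [tendstoInMeasure_iff_measureReal_norm]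
  intro ε hε
  have hbound : Tendsto (fun n => (∫ ω, f n ω ^ 2 ∂μ) / ε ^ 2) l (𝓝 0) := by
    simpa using hlim.div_const (ε ^ 2)
  refine squeeze_zero' (Eventually.of_forall fun _ => measureReal_nonneg) ?_ hbound
  filter_upwards [hf] with n hn
  rw [le_div_iff₀ (by positivity), mul_comm]
  calc ε ^ 2 * μ.real {ω | ε ≤ ‖f n ω - 0‖}
      ≤ ε ^ 2 * μ.real {ω | ε ^ 2 ≤ f n ω ^ 2} := by
        refine mul_le_mul_of_nonneg_left (measureReal_mono fun ω hω => ?_) (sq_nonneg ε)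
        simp only [Set.mem_ofPred_eq, sub_zero, Real.norm_eq_abs] at hω ⊢
        nlinarith [abs_nonneg (f n ω), sq_abs (f n ω)]
    _ ≤ ∫ ω, f n ω ^ 2 ∂μ :=
        mul_meas_ge_le_integral_of_nonneg (Eventually.of_forall fun ω => sq_nonneg _) hn _

end MeasureTheory

namespace ProbabilityTheory

theorem integral_comp_eq_zero_of_indepFun {Ω S T : Type*} [MeasurableSpace Ω]
    [MeasurableSpace S] [MeasurableSpace T] {μ : Measure Ω} [IsProbabilityMeasure μ]
    {X : Ω → S} {W : Ω → T} (hX : Measurable X) (hW : Measurable W) (hXW : IndepFun X W μ)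
    {g : S × T → ℝ} (hg : StronglyMeasurable g)
    (hdeg : ∀ᵐ w ∂(μ.map W), ∫ s, g (s, w) ∂(μ.map X) = 0) :
    ∫ ω, g (X ω, W ω) ∂μ = 0 := by
  have hlaw : μ.map (fun ω => (X ω, W ω)) = (μ.map X).prod (μ.map W) :=
    (indepFun_iff_map_prod_eq_prod_map_map hX.aemeasurable hW.aemeasurable).mp hXW
  rw [← integral_map (hX.prodMk hW).aemeasurable hg.aestronglyMeasurable, hlaw]
  by_cases hint : Integrable g ((μ.map X).prod (μ.map W))
  · rw [integral_prod_symm g hint]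
    exact integral_eq_zero_of_ae hdeg
  · exact integral_undef hint

theorem iIndepFun.indepFun_triple {Ω S : Type*} [MeasurableSpace Ω] [MeasurableSpace S]
    {μ : Measure Ω} {X : ℕ → Ω → S} (hX : ∀ i, Measurable (X i))
    (hindep : iIndepFun X μ) {a b c d : ℕ} (hab : a ≠ b) (hac : a ≠ c) (had : a ≠ d) :
    IndepFun (X a) (fun ω => (X b ω, X c ω, X d ω)) μ := by
  have hdisj : Disjoint ({a} : Finset ℕ) {b, c, d} := by simp [hab, hac, had]
  exact (hindep.indepFun_finset _ _ hdisj hX).comp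
    (φ := fun v : ∀ _ : ({a} : Finset ℕ), S => v ⟨a, mem_singleton_self a⟩)
    (ψ := fun v : ∀ _ : ({b, c, d} : Finset ℕ), S =>
      (v ⟨b, by simp⟩, v ⟨c, by simp⟩, v ⟨d, by simp⟩))
    (measurable_pi_apply _) (by fun_prop)

variable {Ω S : Type*} [MeasurableSpace Ω] [MeasurableSpace S] {μ : Measure Ω}
  [IsProbabilityMeasure μ] {X : ℕ → Ω → S}

theorem identDistrib_pair (hX : ∀ i, Measurable (X i)) (hindep : iIndepFun X μ)
    (hident : ∀ i, μ.map (X i) = μ.map (X 0)) {a b : ℕ} (hab : a ≠ b) :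
    IdentDistrib (fun ω => (X a ω, X b ω)) (fun ω => (X 0 ω, X 1 ω)) μ μ where
  aemeasurable_fst := ((hX a).prodMk (hX b)).aemeasurable
  aemeasurable_snd := ((hX 0).prodMk (hX 1)).aemeasurable
  map_eq := by
    rw [(indepFun_iff_map_prod_eq_prod_map_map (hX a).aemeasurable (hX b).aemeasurable).mp
        (hindep.indepFun hab),
      (indepFun_iff_map_prod_eq_prod_map_map (hX 0).aemeasurable (hX 1).aemeasurable).mp
        (hindep.indepFun zero_ne_one), hident a, hident b, hident 1]

variable {h : S → S → ℝ}

theorem integral_kernel_mul_kernel_eq_zero (hX : ∀ i, Measurable (X i))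
    (hindep : iIndepFun X μ) (hident : ∀ i, μ.map (X i) = μ.map (X 0))
    (hh : Measurable (Function.uncurry h))
    (hdeg : ∀ᵐ x ∂(μ.map (X 0)), ∫ s, h s x ∂(μ.map (X 0)) = 0)
    {a b c d : ℕ} (hab : a ≠ b) (hac : a ≠ c) (had : a ≠ d) :
    ∫ ω, h (X a ω) (X b ω) * h (X c ω) (X d ω) ∂μ = 0 := by
  set W := fun ω => (X b ω, X c ω, X d ω)
  have hW : Measurable W := (hX b).prodMk ((hX c).prodMk (hX d))
  have hdegW : ∀ᵐ w ∂(μ.map W), ∫ s, h s w.1 * h w.2.1 w.2.2 ∂(μ.map (X a)) = 0 := by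
    have hfst : (μ.map W).map Prod.fst = μ.map (X 0) := by
      rw [Measure.map_map measurable_fst hW, ← hident b]; rfl
    have hdeg_fst : ∀ᵐ x ∂(μ.map W).map Prod.fst, ∫ s, h s x ∂(μ.map (X 0)) = 0 := by
      rwa [hfst]
    filter_upwards [ae_of_ae_map measurable_fst.aemeasurable hdeg_fst] with w hw
    rw [integral_mul_const, hident a, hw, zero_mul]
  exact integral_comp_eq_zero_of_indepFun (hX a) hW (hindep.indepFun_triple hX hab hac had)
    (g := fun q => h q.1 q.2.1 * h q.2.2.1 q.2.2.2) (by fun_prop) hdegW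

theorem identDistrib_kernel_pair (hX : ∀ i, Measurable (X i)) (hindep : iIndepFun X μ)
    (hident : ∀ i, μ.map (X i) = μ.map (X 0)) (hh : Measurable (Function.uncurry h))
    {a b : ℕ} (hab : a ≠ b) :
    IdentDistrib (fun ω => h (X a ω) (X b ω)) (fun ω => h (X 0 ω) (X 1 ω)) μ μ :=
  (identDistrib_pair hX hindep hident hab).comp hh

theorem integral_kernel_mul_kernel_eq_zero_of_ne_of_ne_swap (hX : ∀ i, Measurable (X i))
    (hindep : iIndepFun X μ) (hident : ∀ i, μ.map (X i) = μ.map (X 0))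
    (hh : Measurable (Function.uncurry h))
    (hsymm : ∀ s s', h s s' = h s' s)
    (hdeg : ∀ᵐ x ∂(μ.map (X 0)), ∫ s, h s x ∂(μ.map (X 0)) = 0)
    {p q : ℕ × ℕ} (hp : p.1 ≠ p.2) (hqp : q ≠ p) (hqp' : q ≠ p.swap) :
    ∫ ω, h (X p.1 ω) (X p.2 ω) * h (X q.1 ω) (X q.2 ω) ∂μ = 0 := by
  by_cases hshared : p.1 = q.1 ∨ p.1 = q.2
  · -- then `p.2` is the index missing from `q`; by symmetry of `h` it can be put first
    have h2q1 : p.2 ≠ q.1 := fun h2 => by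
      rcases hshared with h1 | h1
      · exact hp (h1.trans h2.symm)
      · exact hqp' (Prod.ext h2.symm h1.symm)
    have h2q2 : p.2 ≠ q.2 := fun h2 => by
      rcases hshared with h1 | h1
      · exact hqp (Prod.ext h1.symm h2.symm)
      · exact hp (h1.trans h2.symm)
    simp_rw [hsymm (X p.1 _)]
    exact integral_kernel_mul_kernel_eq_zero hX hindep hident hh hdeg hp.symm h2q1 h2q2
  · rw [not_or] at hshared
    exact integral_kernel_mul_kernel_eq_zero hX hindep hident hh hdeg hp hshared.1 hshared.2

theorem integral_sq_sum_offDiag (hX : ∀ i, Measurable (X i)) (hindep : iIndepFun X μ)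
    (hident : ∀ i, μ.map (X i) = μ.map (X 0)) (hh : Measurable (Function.uncurry h))
    (hsymm : ∀ s s', h s s' = h s' s) (hL2 : MemLp (fun ω => h (X 0 ω) (X 1 ω)) 2 μ)
    (hdeg : ∀ᵐ x ∂(μ.map (X 0)), ∫ s, h s x ∂(μ.map (X 0)) = 0) (N : ℕ) :
    ∫ ω, (∑ p ∈ (range N).offDiag, h (X p.1 ω) (X p.2 ω)) ^ 2 ∂μ
      = 2 * N * (N - 1) * ∫ ω, h (X 0 ω) (X 1 ω) ^ 2 ∂μ := by
  set P := (range N).offDiag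
  set f : ℕ × ℕ → Ω → ℝ := fun p ω => h (X p.1 ω) (X p.2 ω)
  set v := ∫ ω, h (X 0 ω) (X 1 ω) ^ 2 ∂μ
  have hf : ∀ p ∈ P, IdentDistrib (f p) (f (0, 1)) μ μ := fun p hp =>
    identDistrib_kernel_pair hX hindep hident hh (mem_offDiag.1 hp).2.2
  have hint : ∀ p ∈ P, ∀ q ∈ P, Integrable (fun ω => f p ω * f q ω) μ :=
    fun p hp q hq =>
      ((hf p hp).memLp_iff.2 hL2).integrable_mul ((hf q hq).memLp_iff.2 hL2)
  have hrow : ∀ p ∈ P, ∑ q ∈ P, ∫ ω, f p ω * f q ω ∂μ = 2 * v := by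
    intro p hp
    obtain ⟨hp1, hp2, hp12⟩ := mem_offDiag.1 hp
    have hdiag : ∫ ω, f p ω * f p ω ∂μ = v := by
      simp_rw [← sq]
      exact ((hf p hp).comp (measurable_id.pow_const 2)).integral_eq
    have hswap : ∀ ω, f p ω * f p.swap ω = f p ω * f p ω := fun ω => by
      simp only [f, Prod.fst_swap, Prod.snd_swap, hsymm (X p.2 ω)]
    rw [sum_eq_add_of_mem p p.swap hp (mem_offDiag.2 ⟨hp2, hp1, hp12.symm⟩)
        (fun he => hp12 (congrArg Prod.fst he))
        (fun q _ hq => integral_kernel_mul_kernel_eq_zero_of_ne_of_ne_swap hX hindep hident hh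
          hsymm hdeg hp12 hq.1 hq.2),
      integral_congr_ae (Eventually.of_forall hswap), hdiag, two_mul]
  calc ∫ ω, (∑ p ∈ P, f p ω) ^ 2 ∂μ
      = ∑ p ∈ P, ∑ q ∈ P, ∫ ω, f p ω * f q ω ∂μ := by
        simp_rw [sq, sum_mul_sum]
        rw [integral_finsetSum _ fun p hp => integrable_finsetSum _ (hint p hp)]
        exact sum_congr rfl fun p hp => integral_finsetSum _ (hint p hp)
    _ = ∑ p ∈ P, 2 * v := sum_congr rfl hrow
    _ = 2 * N * (N - 1) * v := by
        rw [sum_const, offDiag_card, card_range, nsmul_eq_mul, Nat.cast_sub (Nat.le_mul_self N)]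
        push_cast
        ring

theorem tendstoInMeasure_inv_sqrt_mul_sum_offDiag (hX : ∀ i, Measurable (X i))
    (hindep : iIndepFun X μ) (hident : ∀ i, μ.map (X i) = μ.map (X 0))
    (hh : Measurable (Function.uncurry h)) (hsymm : ∀ s s', h s s' = h s' s)
    (hL2 : MemLp (fun ω => h (X 0 ω) (X 1 ω)) 2 μ)
    (hdeg : ∀ᵐ x ∂(μ.map (X 0)), ∫ s, h s x ∂(μ.map (X 0)) = 0) :
    TendstoInMeasure μ (fun (N : ℕ) ω =>
      (√N)⁻¹ * (((N : ℝ) - 1)⁻¹ * ∑ p ∈ (range N).offDiag, h (X p.1 ω) (X p.2 ω)))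
      atTop 0 := by
  set T : ℕ → Ω → ℝ := fun N ω => ∑ p ∈ (range N).offDiag, h (X p.1 ω) (X p.2 ω)
  have hT : ∀ N, Integrable (fun ω => T N ω ^ 2) μ := fun N =>
    (memLp_two_iff_integrable_sq (by fun_prop)).1 <| memLp_finsetSum _ fun p hp =>
      (identDistrib_kernel_pair hX hindep hident hh (mem_offDiag.1 hp).2.2).memLp_iff.2 hL2
  have hval : ∀ N : ℕ, 2 ≤ N →
      ∫ ω, ((√N)⁻¹ * (((N : ℝ) - 1)⁻¹ * T N ω)) ^ 2 ∂μ
        = 2 * (∫ ω, h (X 0 ω) (X 1 ω) ^ 2 ∂μ) * ((N : ℝ) - 1)⁻¹ := by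
    intro N hN
    have hN1 : (1 : ℝ) < N := by exact_mod_cast hN
    simp_rw [mul_pow]
    rw [integral_const_mul, integral_const_mul,
      integral_sq_sum_offDiag hX hindep hident hh hsymm hL2 hdeg, inv_pow,
      Real.sq_sqrt N.cast_nonneg]
    field_simp
  refine tendstoInMeasure_zero_of_tendsto_integral_sq
    (Eventually.of_forall fun N => by simp_rw [mul_pow]; exact ((hT N).const_mul _).const_mul _) ?_
  have hN : Tendsto (fun N : ℕ => (N : ℝ) - 1) atTop atTop :=
    tendsto_atTop_add_const_right _ (-1 : ℝ) tendsto_natCast_atTop_atTop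
  have hlim (c : ℝ) : Tendsto (fun N : ℕ => c * ((N : ℝ) - 1)⁻¹) atTop (𝓝 0) := by
    simpa using (tendsto_inv_atTop_zero.comp hN).const_mul c
  exact (hlim _).congr' ((eventually_ge_atTop 2).mono fun N hN => (hval N hN).symm)

end ProbabilityTheory

theorem von_mises_expansion_first_order_general
    {Ω : Type*} [MeasurableSpace Ω] (μ : Measure Ω) [IsProbabilityMeasure μ]
    {S : Type*} [MeasurableSpace S]
    (O : ℕ → Ω → S) (hO_meas : ∀ i, Measurable (O i))
    -- i.i.d. sample
    (hO_indep : iIndepFun O μ)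
    (hO_ident : ∀ i, Measure.map (O i) μ = Measure.map (O 0) μ)
    (θ : ℝ) (φ' : S → ℝ) (φ'' : S → S → ℝ)
    (hφ''_meas : Measurable (Function.uncurry φ''))
    -- symmetric, square-integrable, degenerate kernel
    (hφ''_symm : ∀ s s', φ'' s s' = φ'' s' s)
    (hφ''_sq : Integrable (fun ω => (φ'' (O 0 ω) (O 1 ω))^2) μ)
    (hφ''_deg : ∀ᵐ s ∂(Measure.map (O 0) μ), ∫ ω, φ'' s (O 0 ω) ∂μ = 0)
    -- pseudo-observations and remainder
    (θhat : ℕ → ℕ → Ω → ℝ) (R : ℕ → ℕ → Ω → ℝ)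
    (hexp : ∀ N ≥ 2, ∀ i < N, ∀ ω,
      θhat N i ω = θ + φ' (O i ω) +
        ((N : ℝ) - 1)⁻¹ * (∑ l ∈ (Finset.range N).erase i, φ'' (O l ω) (O i ω)) +
        R N i ω)
    -- √N max_i |R_{N,i}| → 0 in probability
    (hR : TendstoInMeasure μ
      (fun (N : ℕ) ω => Real.sqrt (N : ℝ) * (⨆ i ∈ Finset.range N, |R N i ω|)) atTop (fun _ => 0)) :
    TendstoInMeasure μ
      (fun (N : ℕ) ω => (Real.sqrt (N : ℝ))⁻¹ *
        ∑ i ∈ Finset.range N, (θhat N i ω - θ - φ' (O i ω)))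
      atTop (fun _ => 0) := by
  have hdeg : ∀ᵐ x ∂(μ.map (O 0)), ∫ s, φ'' s x ∂(μ.map (O 0)) = 0 := by
    filter_upwards [hφ''_deg] with x hx
    simp_rw [← hφ''_symm x]
    rwa [integral_map (hO_meas 0).aemeasurable hφ''_meas.of_uncurry_left.aestronglyMeasurable]
  have hL2 : MemLp (fun ω => φ'' (O 0 ω) (O 1 ω)) 2 μ :=
    (memLp_two_iff_integrable_sq
      (hφ''_meas.comp ((hO_meas 0).prodMk (hO_meas 1))).aestronglyMeasurable).2 hφ''_sq
  have hU := tendstoInMeasure_inv_sqrt_mul_sum_offDiag hO_meas hO_indep hO_ident hφ''_meas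
    hφ''_symm hL2 hdeg
  have hRem : TendstoInMeasure μ (fun (N : ℕ) ω => (√N)⁻¹ * ∑ i ∈ range N, R N i ω) atTop 0 :=
    hR.of_norm_le <| Eventually.of_forall fun N ω =>
      (abs_inv_sqrt_mul_sum_le _ N).trans (le_abs_self _)
  refine (hU.add hRem).congr' ?_ (Eventually.of_forall fun _ => add_zero _)
  filter_upwards [eventually_ge_atTop 2] with N hN
  refine Eventually.of_forall fun ω => ?_
  have hterm : ∀ i ∈ range N, θhat N i ω - θ - φ' (O i ω)
      = ((N : ℝ) - 1)⁻¹ * ∑ l ∈ (range N).erase i, φ'' (O l ω) (O i ω) + R N i ω :=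
    fun i hi => by rw [hexp N hN i (mem_range.1 hi) ω]; ring
  simp only [Pi.add_apply, sum_congr rfl hterm, sum_add_distrib, ← mul_sum,
    sum_sum_erase_eq_sum_offDiag, mul_add]

/-- If the pseudo-observations admit the second-order von Mises
expansion θ̂_i = θ + φ'_i + (N−1)⁻¹ Σ_{l≠i} φ''_{(l,i)} + R_{N,i} with a mean-zero
first-order term, a degenerate symmetric second-order kernel, and a uniformly
negligible remainder, then N^{-1/2} Σ_i (θ̂_i − θ − φ'_i) → 0 in probability. -/
theorem von_mises_expansion_first_order
    {Ω : Type*} [MeasurableSpace Ω] (μ : Measure Ω) [IsProbabilityMeasure μ]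
    {S : Type*} [MeasurableSpace S]
    (O : ℕ → Ω → S) (hO_meas : ∀ i, Measurable (O i))
    -- i.i.d. sample
    (hO_indep : iIndepFun O μ)
    (hO_ident : ∀ i, Measure.map (O i) μ = Measure.map (O 0) μ)
    (θ : ℝ) (φ' : S → ℝ) (φ'' : S → S → ℝ)
    (hφ'_meas : Measurable φ') (hφ''_meas : Measurable (Function.uncurry φ''))
    -- φ'_i i.i.d. mean zero with finite variance
    (hφ'_mean : ∫ ω, φ' (O 0 ω) ∂μ = 0)
    (hφ'_var : Integrable (fun ω => (φ' (O 0 ω))^2) μ)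
    -- symmetric, square-integrable, degenerate kernel
    (hφ''_symm : ∀ s s', φ'' s s' = φ'' s' s)
    (hφ''_sq : Integrable (fun ω => (φ'' (O 0 ω) (O 1 ω))^2) μ)
    (hφ''_deg : ∀ᵐ s ∂(Measure.map (O 0) μ), ∫ ω, φ'' s (O 0 ω) ∂μ = 0)
    -- pseudo-observations and remainder
    (θhat : ℕ → ℕ → Ω → ℝ) (R : ℕ → ℕ → Ω → ℝ)
    (hexp : ∀ N ≥ 2, ∀ i < N, ∀ ω,
      θhat N i ω = θ + φ' (O i ω) +
        ((N : ℝ) - 1)⁻¹ * (∑ l ∈ (Finset.range N).erase i, φ'' (O l ω) (O i ω)) +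
        R N i ω)
    -- √N max_i |R_{N,i}| → 0 in probability
    (hR : TendstoInMeasure μ
      (fun (N : ℕ) ω => Real.sqrt (N : ℝ) * (⨆ i ∈ Finset.range N, |R N i ω|)) atTop (fun _ => 0)) :
    TendstoInMeasure μ
      (fun (N : ℕ) ω => (Real.sqrt (N : ℝ))⁻¹ *
        ∑ i ∈ Finset.range N, (θhat N i ω - θ - φ' (O i ω)))
      atTop (fun _ => 0) :=
  von_mises_expansion_first_order_general μ O hO_meas hO_indep hO_ident θ φ' φ'' hφ''_meas hφ''_symm
    hφ''_sq hφ''_deg θhat R hexp hR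
end
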